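/- arXiv:2602.03862 — 2 statements merged into one kernel-verified Lean document; each statement's English description precedes it below -/
import Mathlib

section
/- Let H be a vertex-minimal finite simple graph with θ(H) ≤ 8 and χ'_s(H) > 20, and suppose H has only vertices of degrees 3, 4, 5. If a 3-vertex x of H is adjacent to another 3-vertex, then the other two neighbors of x are both 5-vertices. -/
open SimpleGraph

variable {V : Type*}

/-- Two edges are at distance at most 2 (they "see" each other): distinct and
some endpoint of one equals or is adjacent to some endpoint of the other. -/
def EdgeSees (G : SimpleGraph V) (e e' : Sym2 V) : Prop :=
  e ≠ e' ∧ ∃ a ∈ e, ∃ b ∈ e', a = b ∨ G.Adj a b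

/-- `G` admits a strong `N`-edge-coloring. -/
def HasStrongColoring (G : SimpleGraph V) (N : ℕ) : Prop :=
  ∃ f : G.edgeSet → Fin N, ∀ e e' : G.edgeSet, EdgeSees G e.val e'.val → f e ≠ f e'

/-- `G − v`: delete the vertex `v` (remove all edges incident to it). -/
def DelV (G : SimpleGraph V) (v : V) : SimpleGraph V where
  Adj a b := G.Adj a b ∧ a ≠ v ∧ b ≠ v
  symm := ⟨fun _ _ h => ⟨h.1.symm, h.2.2, h.2.1⟩⟩
  loopless := ⟨fun a h => G.loopless.irrefl a h.1⟩

/-!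
A 3-vertex `x` with neighbours `y`, `z`, `w`, where `y` is a 3-vertex and `z` is not a 5-vertex,
is reducible. Colour `H − x` by minimality. By the Ore bound every neighbour of `x` has degree at
most 5, and an edge `xu` sees, in `H − x`, at most `Σ_{p ∼ x} (d(p) - 1)` edges at the neighbours
of `x` plus `(d(u) - 1)(7 - d(u))` edges at the second neighbours through `u`. With `d(y) = 3`
and `d(z) ≤ 4` this leaves at most 18, 18 and 17 forbidden colours for `xz`, `xw` and `xy`, so the
three edges can be coloured greedily from 20 colours.
-/

section

variable {G : SimpleGraph V}

lemma mem_edgeSet_delV {v : V} {e : Sym2 V} :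
    e ∈ (DelV G v).edgeSet ↔ e ∈ G.edgeSet ∧ v ∉ e := by
  induction e with
  | _ a b =>
    simp only [mem_edgeSet, Sym2.mem_iff, not_or]
    exact ⟨fun h => ⟨h.1, h.2.1.symm, h.2.2.symm⟩, fun h => ⟨h.1, Ne.symm h.2.1, Ne.symm h.2.2⟩⟩

lemma EdgeSees.delV {v : V} {e e' : Sym2 V} (h : EdgeSees G e e') (he : v ∉ e) (he' : v ∉ e') :
    EdgeSees (DelV G v) e e' := by
  obtain ⟨hne, a, ha, b, hb, hab⟩ := h
  refine ⟨hne, a, ha, b, hb, hab.imp_right fun hadj => ⟨hadj, ?_, ?_⟩⟩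
  · rintro rfl; exact he ha
  · rintro rfl; exact he' hb

lemma HasStrongColoring.exists_sym2_coloring {N : ℕ} [NeZero N] (h : HasStrongColoring G N) :
    ∃ g : Sym2 V → Fin N, ∀ e ∈ G.edgeSet, ∀ e' ∈ G.edgeSet, EdgeSees G e e' → g e ≠ g e' := by
  classical
  obtain ⟨f, hf⟩ := h
  refine ⟨fun e => if he : e ∈ G.edgeSet then f ⟨e, he⟩ else 0, fun e he e' he' hee' => ?_⟩
  simpa only [dif_pos he, dif_pos he'] using hf ⟨e, he⟩ ⟨e', he'⟩ hee'

lemma hasStrongColoring_of_delV {N : ℕ} {x : V} (g : Sym2 V → Fin N)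
    (hg : ∀ e ∈ (DelV G x).edgeSet, ∀ e' ∈ (DelV G x).edgeSet, EdgeSees (DelV G x) e e' →
      g e ≠ g e')
    (c : V → Fin N) (hc : ∀ u v, G.Adj x u → G.Adj x v → u ≠ v → c u ≠ c v)
    (hfree : ∀ u, G.Adj x u → ∀ e ∈ G.edgeSet, x ∉ e → EdgeSees G s(x, u) e → g e ≠ c u) :
    HasStrongColoring G N := by
  classical
  have key : ∀ e ∈ G.edgeSet, ∀ h : x ∈ e, G.Adj x (Sym2.Mem.other h) := fun e he h => by
    rwa [← Sym2.other_spec h, mem_edgeSet] at he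
  refine ⟨fun e => if h : x ∈ e.val then c (Sym2.Mem.other h) else g e, ?_⟩
  rintro ⟨e, he⟩ ⟨e', he'⟩ hee'
  change EdgeSees G e e' at hee'
  dsimp only
  split_ifs with h h' h'
  · refine hc _ _ (key e he h) (key e' he' h') fun hoth => hee'.1 ?_
    rw [← Sym2.other_spec h, ← Sym2.other_spec h', hoth]
  · refine (hfree _ (key e he h) e' he' h' ?_).symm
    rwa [Sym2.other_spec h]
  · refine hfree _ (key e' he' h') e he h ?_
    rw [Sym2.other_spec h']
    obtain ⟨hne, a, ha, b, hb, hab⟩ := hee'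
    exact ⟨hne.symm, b, hb, a, ha, hab.imp Eq.symm G.adj_symm⟩
  · exact hg e (mem_edgeSet_delV.2 ⟨he, h⟩) e' (mem_edgeSet_delV.2 ⟨he', h'⟩) (hee'.delV h h')

end

/-- Edges of `G − x` seen by `xu` lie at a neighbour `p` of `x` or at a neighbour `v ≠ x` of `u`;
the edge `xp` is not in `G − x` and `uv` is already counted at `u`, hence the erasures. -/
def seenEdgesCover [Fintype V] [DecidableEq V] (G : SimpleGraph V) [DecidableRel G.Adj]
    (x u : V) : Finset (Sym2 V) :=
  (G.neighborFinset x).biUnion (fun p => (G.incidenceFinset p).erase s(x, p)) ∪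
    ((G.neighborFinset u).erase x).biUnion (fun v => (G.incidenceFinset v).erase s(u, v))

section

variable {G : SimpleGraph V} [Fintype V] [DecidableEq V] [DecidableRel G.Adj]

lemma EdgeSees.mem_seenEdgesCover {x u : V} {e : Sym2 V} (hxu : G.Adj x u) (he : e ∈ G.edgeSet)
    (hx : x ∉ e) (h : EdgeSees G s(x, u) e) : e ∈ seenEdgesCover G x u := by
  obtain ⟨-, a, ha, b, hb, hab⟩ := h
  have hbx : b ≠ x := by rintro rfl; exact hx hb
  have hinc : e ∈ G.incidenceFinset b := (mem_incidenceFinset _ _ _).2 ⟨he, hb⟩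
  have hnear : ∀ p, G.Adj x p → e ∈ G.incidenceFinset p →
      e ∈ seenEdgesCover G x u := fun p hp hep =>
    Finset.mem_union_left _ <| Finset.mem_biUnion.2 ⟨p, (mem_neighborFinset _ _ _).2 hp,
      Finset.mem_erase.2 ⟨by rintro rfl; exact hx (Sym2.mem_mk_left x p), hep⟩⟩
  rcases Sym2.mem_iff.1 ha with rfl | rfl
  · rcases hab with rfl | hab
    · exact absurd hb hx
    · exact hnear b hab hinc
  · rcases hab with rfl | hab
    · exact hnear a hxu hinc
    · by_cases heab : e = s(a, b)
      · subst heab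
        exact hnear a hxu ((mem_incidenceFinset _ _ _).2 ⟨he, Sym2.mem_mk_left a b⟩)
      · refine Finset.mem_union_right _ <| Finset.mem_biUnion.2 ⟨b, ?_, ?_⟩
        · exact Finset.mem_erase.2 ⟨hbx, (mem_neighborFinset _ _ _).2 hab⟩
        · exact Finset.mem_erase.2 ⟨heab, hinc⟩

lemma card_incidenceFinset_erase {p q : V} (hpq : G.Adj p q) :
    ((G.incidenceFinset q).erase s(p, q)).card = G.degree q - 1 := by
  rw [Finset.card_erase_of_mem ((mem_incidenceFinset _ _ _).2 ⟨hpq, Sym2.mem_mk_right p q⟩),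
    card_incidenceFinset_eq_degree]

lemma card_seenEdgesCover_le (x u : V) :
    (seenEdgesCover G x u).card ≤ ∑ p ∈ G.neighborFinset x, (G.degree p - 1) +
      ∑ v ∈ (G.neighborFinset u).erase x, (G.degree v - 1) := by
  refine (Finset.card_union_le _ _).trans (add_le_add ?_ ?_) <;>
    refine Finset.card_biUnion_le.trans (Finset.sum_le_sum fun p hp => ?_)
  · exact (card_incidenceFinset_erase ((mem_neighborFinset _ _ _).1 hp)).le
  · exact (card_incidenceFinset_erase
      ((mem_neighborFinset _ _ _).1 (Finset.mem_of_mem_erase hp))).le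

lemma sum_degree_sub_one_le_of_ore {k : ℕ}
    (hore : ∀ a b, G.Adj a b → G.degree a + G.degree b ≤ k) {x u : V} (hxu : G.Adj x u) :
    ∑ v ∈ (G.neighborFinset u).erase x, (G.degree v - 1) ≤
      (G.degree u - 1) * (k - 1 - G.degree u) := by
  calc ∑ v ∈ (G.neighborFinset u).erase x, (G.degree v - 1)
      ≤ ∑ _v ∈ (G.neighborFinset u).erase x, (k - 1 - G.degree u) :=
        Finset.sum_le_sum fun v hv => by
          have := hore u v ((mem_neighborFinset _ _ _).1 (Finset.mem_of_mem_erase hv))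
          omega
    _ = (G.degree u - 1) * (k - 1 - G.degree u) := by
        rw [Finset.sum_const, smul_eq_mul, Finset.card_erase_of_mem
          ((mem_neighborFinset _ _ _).2 hxu.symm), card_neighborFinset_eq_degree]

lemma exists_neighborFinset_eq_of_degree_eq_three {x y z : V} (hx : G.degree x = 3)
    (hxy : G.Adj x y) (hxz : G.Adj x z) (hzy : z ≠ y) :
    ∃ w, w ≠ y ∧ w ≠ z ∧ G.neighborFinset x = {y, z, w} := by
  have hyz : ({y, z} : Finset V) ⊆ G.neighborFinset x := by
    simp [Finset.insert_subset_iff, hxy, hxz]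
  obtain ⟨w, hw, hwyz⟩ := Finset.exists_mem_notMem_of_card_lt_card (s := {y, z})
    (t := G.neighborFinset x)
    (by rw [card_neighborFinset_eq_degree, hx, Finset.card_pair hzy.symm]; omega)
  simp only [Finset.mem_insert, Finset.mem_singleton, not_or] at hwyz
  refine ⟨w, hwyz.1, hwyz.2, (Finset.eq_of_subset_of_card_le ?_ ?_).symm⟩
  · exact Finset.insert_subset_iff.2 ⟨hyz (by simp), Finset.insert_subset_iff.2
      ⟨hyz (by simp), Finset.singleton_subset_iff.2 hw⟩⟩
  · rw [card_neighborFinset_eq_degree, hx, Finset.card_eq_three.2 ⟨y, z, w, hzy.symm,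
      Ne.symm hwyz.1, Ne.symm hwyz.2, rfl⟩]

lemma hasStrongColoring_of_delV_of_neighborFinset_eq {N : ℕ} {x y z w : V}
    (hNx : G.neighborFinset x = {y, z, w}) (hzy : z ≠ y) (hwy : w ≠ y) (hwz : w ≠ z)
    (g : Sym2 V → Fin N)
    (hg : ∀ e ∈ (DelV G x).edgeSet, ∀ e' ∈ (DelV G x).edgeSet, EdgeSees (DelV G x) e e' →
      g e ≠ g e')
    {a b c : Fin N} (ha : a ∉ (seenEdgesCover G x y).image g)
    (hb : b ∉ (seenEdgesCover G x z).image g) (hc : c ∉ (seenEdgesCover G x w).image g)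
    (hab : a ≠ b) (hac : a ≠ c) (hbc : b ≠ c) :
    HasStrongColoring G N := by
  have hN : ∀ u, G.Adj x u → u = y ∨ u = z ∨ u = w := fun u hu => by
    simpa [hNx] using (mem_neighborFinset G x u).2 hu
  refine hasStrongColoring_of_delV g hg (fun v => if v = y then a else if v = z then b else c)
    (fun u v hu hv huv => ?_) (fun u hu e he hxe hsee => ?_)
  · rcases hN u hu with rfl | rfl | rfl <;> rcases hN v hv with rfl | rfl | rfl <;>
      simp_all [Ne.symm]
  · have hmem := Finset.mem_image_of_mem g (hsee.mem_seenEdgesCover hu he hxe)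
    rcases hN u hu with rfl | rfl | rfl
    · rw [if_pos rfl]; exact fun h => ha (h ▸ hmem)
    · rw [if_neg hzy, if_pos rfl]; exact fun h => hb (h ▸ hmem)
    · rw [if_neg hwy, if_neg hwz]; exact fun h => hc (h ▸ hmem)

end

lemma exists_pairwise_ne_notMem {α : Type*} [Fintype α] [DecidableEq α] (A B C : Finset α)
    (hA : A.card + 2 < Fintype.card α) (hB : B.card + 1 < Fintype.card α)
    (hC : C.card < Fintype.card α) :
    ∃ a ∉ A, ∃ b ∉ B, ∃ c ∉ C, a ≠ b ∧ a ≠ c ∧ b ≠ c := by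
  have fresh : ∀ s : Finset α, s.card < Fintype.card α → ∃ i, i ∉ s := fun s hs => by
    obtain ⟨i, -, hi⟩ := Finset.exists_mem_notMem_of_card_lt_card (t := Finset.univ) hs
    exact ⟨i, hi⟩
  obtain ⟨c, hc⟩ := fresh C hC
  obtain ⟨b, hb⟩ := fresh (insert c B) ((Finset.card_insert_le _ _).trans_lt (by omega))
  obtain ⟨a, ha⟩ := fresh (insert b (insert c A))
    (((Finset.card_insert_le _ _).trans (by grind [Finset.card_insert_le])).trans_lt hA)
  simp only [Finset.mem_insert, not_or] at ha hb
  exact ⟨a, ha.2.2, b, hb.2, c, hc, ha.1, ha.2.1, hb.1⟩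

theorem stmt8_general [Fintype V] (H : SimpleGraph V) [DecidableRel H.Adj]
    (hore : ∀ u w, H.Adj u w → H.degree u + H.degree w ≤ 8)
    (hnc : ¬ HasStrongColoring H 20)
    (hmin : ∀ v, HasStrongColoring (DelV H v) 20) :
    ∀ x y, H.degree x = 3 → H.Adj x y → H.degree y = 3 →
      ∀ z, H.Adj x z → z ≠ y → H.degree z = 5 := by
  classical
  intro x y hdx hxy hdy z hxz hzy
  by_contra hz5
  obtain ⟨w, hwy, hwz, hNx⟩ := exists_neighborFinset_eq_of_degree_eq_three hdx hxy hxz hzy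
  have hxw : H.Adj x w := by simp [← mem_neighborFinset, hNx]
  have hdeg : ∀ u, H.Adj x u → H.degree u ≤ 5 := fun u hu => by have := hore x u hu; omega
  have hsum : ∑ p ∈ H.neighborFinset x, (H.degree p - 1) ≤ 9 := by
    have := hdeg z hxz; have := hdeg w hxw
    rw [hNx, Finset.sum_insert (by simp [hzy.symm, hwy.symm]), Finset.sum_pair hwz.symm]; omega
  obtain ⟨g, hg⟩ := (hmin x).exists_sym2_coloring
  have hcard : ∀ u, H.Adj x u → ((seenEdgesCover H x u).image g).card ≤
      9 + (H.degree u - 1) * (8 - 1 - H.degree u) := fun u hu =>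
    Finset.card_image_le.trans <| (card_seenEdgesCover_le x u).trans <|
      add_le_add hsum (sum_degree_sub_one_le_of_ore hore hu)
  have hmul : ∀ d ≤ 5, (d - 1) * (8 - 1 - d) ≤ 9 := by decide
  obtain ⟨a, ha, b, hb, c, hc, hab, hac, hbc⟩ := exists_pairwise_ne_notMem
    ((seenEdgesCover H x y).image g) ((seenEdgesCover H x z).image g)
    ((seenEdgesCover H x w).image g)
    (by have := hcard y hxy; rw [hdy] at this; simp only [Fintype.card_fin]; omega)
    (by have := hcard z hxz; have := hmul _ (hdeg z hxz); simp only [Fintype.card_fin]; omega)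
    (by have := hcard w hxw; have := hmul _ (hdeg w hxw); simp only [Fintype.card_fin]; omega)
  exact hnc <|
    hasStrongColoring_of_delV_of_neighborFinset_eq hNx hzy hwy hwz g hg ha hb hc hab hac hbc

/-- θ ≤ 8, χ'ₛ > 20, all degrees in {3,4,5}: a 3-vertex adjacent to a 3-vertex
has its other two neighbors of degree 5. -/
theorem stmt8 [Fintype V] (H : SimpleGraph V) [DecidableRel H.Adj]
    (hore : ∀ u w, H.Adj u w → H.degree u + H.degree w ≤ 8)
    (hnc : ¬ HasStrongColoring H 20)
    (hmin : ∀ v, HasStrongColoring (DelV H v) 20)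
    (hdeg : ∀ v, H.degree v = 3 ∨ H.degree v = 4 ∨ H.degree v = 5) :
    ∀ x y, H.degree x = 3 → H.Adj x y → H.degree y = 3 →
      ∀ z, H.Adj x z → z ≠ y → H.degree z = 5 :=
  stmt8_general H hore hnc hmin
end

section
/- Let H be a vertex-minimal finite simple graph with θ(H) ≤ 8 and χ'_s(H) > 20. Then H contains no 4-cycle x₁x₂x₃x₄ in which x₁ is a 3-vertex and x₂, x₃, x₄ are 4-vertices each with exactly two 3-neighbors. -/
open SimpleGraph

variable {V : Type*}

/-- 4(C)-vertex: degree 4 with exactly two neighbors of degree 3. -/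
def Is4C [Fintype V] (H : SimpleGraph V) [DecidableRel H.Adj] (x : V) : Prop :=
  H.degree x = 4 ∧ {y | H.Adj x y ∧ H.degree y = 3}.ncard = 2

/-! Delete the 3-vertex `x₁` and take a strong 20-coloring of `H − x₁`. The three edges at `x₁`
can then be colored greedily: an edge `x₁t` sees only those edges of `H − x₁` that meet `N(x₁)`, or
that join `N(t) \ {x₁}` to vertices outside `N(x₁)`. With `N(x₁) = {x₂, x₄, w}` and `θ(H) ≤ 8`
this leaves at most `18` of them for `x₁w` and, because the neighbors of the 4(C)-vertices
`x₂`, `x₄` have degree sum at most `14` and `x₃` has the two neighbors `x₂, x₄` in `N(x₁)`, at most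
`17` for `x₁x₂` and for `x₁x₄`. Coloring `x₁w` first, each edge sees fewer than `20` colored
edges when its turn comes, so `H` is strongly 20-colorable. -/

open Finset

lemma EdgeSees.symm {G : SimpleGraph V} {e e' : Sym2 V} (h : EdgeSees G e e') :
    EdgeSees G e' e := by
  obtain ⟨hne, a, ha, b, hb, hab⟩ := h
  exact ⟨hne.symm, b, hb, a, ha, hab.imp Eq.symm fun h => h.symm⟩

lemma mem_delV_edgeSet {G : SimpleGraph V} {v : V} {e : Sym2 V} :
    e ∈ (DelV G v).edgeSet ↔ e ∈ G.edgeSet ∧ v ∉ e := by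
  induction e using Sym2.ind with
  | _ a b =>
    simp only [SimpleGraph.mem_edgeSet, DelV, Sym2.mem_iff, not_or]
    exact ⟨fun ⟨h, ha, hb⟩ => ⟨h, Ne.symm ha, Ne.symm hb⟩,
      fun ⟨h, ha, hb⟩ => ⟨h, Ne.symm ha, Ne.symm hb⟩⟩

section StrongColoringOn

variable {G : SimpleGraph V} {N : ℕ}

def IsStrongColoringOn (G : SimpleGraph V) (S : Set (Sym2 V)) (f : Sym2 V → Fin N) : Prop :=
  ∀ e ∈ S, ∀ e' ∈ S, EdgeSees G e e' → f e ≠ f e'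

lemma IsStrongColoringOn.hasStrongColoring {S : Set (Sym2 V)} {f : Sym2 V → Fin N}
    (hf : IsStrongColoringOn G S f) (hS : G.edgeSet ⊆ S) : HasStrongColoring G N :=
  ⟨fun e => f e, fun e e' h => hf e (hS e.2) e' (hS e'.2) h⟩

lemma HasStrongColoring.exists_isStrongColoringOn_delV [NeZero N] {v : V}
    (h : HasStrongColoring (DelV G v) N) :
    ∃ f : Sym2 V → Fin N, IsStrongColoringOn G {e | e ∈ G.edgeSet ∧ v ∉ e} f := by
  classical
  obtain ⟨g, hg⟩ := h
  refine ⟨fun e => if he : e ∈ (DelV G v).edgeSet then g ⟨e, he⟩ else 0, ?_⟩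
  rintro e ⟨he, hve⟩ e' ⟨he', hve'⟩ ⟨hne, a, ha, b, hb, hab⟩
  have hD : e ∈ (DelV G v).edgeSet := mem_delV_edgeSet.2 ⟨he, hve⟩
  have hD' : e' ∈ (DelV G v).edgeSet := mem_delV_edgeSet.2 ⟨he', hve'⟩
  simp only [dif_pos hD, dif_pos hD']
  refine hg ⟨e, hD⟩ ⟨e', hD'⟩ ⟨hne, a, ha, b, hb, hab.imp_right fun hab => ?_⟩
  exact ⟨hab, fun h => hve (h ▸ ha), fun h => hve' (h ▸ hb)⟩

lemma IsStrongColoringOn.exists_insert {S : Set (Sym2 V)} {f : Sym2 V → Fin N}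
    (hf : IsStrongColoringOn G S f) (e : Sym2 V) (C : Finset (Sym2 V))
    (hC : ∀ e' ∈ S, EdgeSees G e e' → e' ∈ C) (hCN : #C < N) :
    ∃ f' : Sym2 V → Fin N, IsStrongColoringOn G (insert e S) f' := by
  classical
  obtain ⟨c, -, hc⟩ := exists_mem_notMem_of_card_lt_card (s := C.image f) (t := univ)
    (card_image_le.trans_lt (by simpa using hCN))
  have hnew : ∀ e' ∈ S, EdgeSees G e e' →
      Function.update f e c e ≠ Function.update f e c e' := by
    intro e' he' hsee
    rw [Function.update_self, Function.update_of_ne hsee.1.symm]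
    exact fun h => hc (h ▸ mem_image_of_mem f (hC e' he' hsee))
  refine ⟨Function.update f e c, fun e₁ he₁ e₂ he₂ hsee => ?_⟩
  by_cases h₁ : e₁ = e <;> by_cases h₂ : e₂ = e
  · exact absurd (h₁.trans h₂.symm) hsee.1
  · subst h₁
    exact hnew e₂ (he₂.resolve_left h₂) hsee
  · subst h₂
    exact (hnew e₁ (he₁.resolve_left h₁) hsee.symm).symm
  · rw [Function.update_of_ne h₁, Function.update_of_ne h₂]
    exact hf e₁ (he₁.resolve_left h₁) e₂ (he₂.resolve_left h₂) hsee

end StrongColoringOn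

section ConflictCover

def conflictCover (G : SimpleGraph V) [Fintype V] [DecidableRel G.Adj] [DecidableEq V]
    (v t : V) : Finset (Sym2 V) :=
  (G.neighborFinset v).biUnion (fun u => ((G.neighborFinset u).erase v).image (s(u, ·))) ∪
    ((G.neighborFinset t).erase v).biUnion
      (fun u => (G.neighborFinset u \ G.neighborFinset v).image (s(u, ·)))

variable {G : SimpleGraph V} [Fintype V] [DecidableRel G.Adj] [DecidableEq V]

lemma mem_conflictCover {v t : V} {e : Sym2 V} (hvt : G.Adj v t) (he : e ∈ G.edgeSet)
    (hve : v ∉ e) (hsee : EdgeSees G s(v, t) e) : e ∈ conflictCover G v t := by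
  have eq_mk : ∀ y ∈ e, ∃ z, e = s(y, z) ∧ G.Adj y z ∧ z ≠ v := by
    intro y hy
    obtain ⟨z, rfl⟩ := Sym2.mem_iff_exists.1 hy
    exact ⟨z, rfl, he, fun h => hve (h ▸ Sym2.mem_mk_right y z)⟩
  simp only [conflictCover, mem_union, mem_biUnion, mem_image, mem_erase, mem_sdiff,
    mem_neighborFinset]
  by_cases hmeet : ∃ y ∈ e, G.Adj v y
  · obtain ⟨y, hy, hvy⟩ := hmeet
    obtain ⟨z, rfl, hyz, hzv⟩ := eq_mk y hy
    exact Or.inl ⟨y, hvy, z, ⟨hzv, hyz⟩, rfl⟩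
  · push Not at hmeet
    obtain ⟨-, x, hx, y, hy, hxy⟩ := hsee
    have hty : G.Adj t y := by
      rcases Sym2.mem_iff.1 hx with rfl | rfl
      · rcases hxy with rfl | h
        · exact absurd hy hve
        · exact absurd h (hmeet y hy)
      · rcases hxy with rfl | h
        · exact absurd hvt (hmeet _ hy)
        · exact h
    obtain ⟨z, rfl, hyz, -⟩ := eq_mk y hy
    exact Or.inr ⟨y, ⟨fun h => hve (h ▸ Sym2.mem_mk_left y z), hty⟩, z,
      ⟨hyz, hmeet z (Sym2.mem_mk_right y z)⟩, rfl⟩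

lemma card_conflictCover_le (v t : V) :
    #(conflictCover G v t) ≤ ∑ u ∈ G.neighborFinset v, (G.degree u - 1) +
      ∑ u ∈ (G.neighborFinset t).erase v, #(G.neighborFinset u \ G.neighborFinset v) := by
  refine (card_union_le _ _).trans (add_le_add ?_ ?_)
  · refine card_biUnion_le.trans (sum_le_sum fun u hu => card_image_le.trans ?_)
    rw [card_erase_of_mem ((mem_neighborFinset _ _ _).2 ((mem_neighborFinset _ _ _).1 hu).symm),
      card_neighborFinset_eq_degree]
  · exact card_biUnion_le.trans (sum_le_sum fun u _ => card_image_le)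

lemma IsStrongColoringOn.exists_insert_edge {N : ℕ} {T : Finset (Sym2 V)} {f : Sym2 V → Fin N}
    {v t : V} (hf : IsStrongColoringOn G (↑T ∪ {e | e ∈ G.edgeSet ∧ v ∉ e}) f)
    (hvt : G.Adj v t) (hN : #T + #(conflictCover G v t) < N) :
    ∃ f' : Sym2 V → Fin N,
      IsStrongColoringOn G (↑(insert s(v, t) T) ∪ {e | e ∈ G.edgeSet ∧ v ∉ e}) f' := by
  rw [coe_insert, Set.insert_union]
  refine hf.exists_insert _ (T ∪ conflictCover G v t) (fun e he hsee => ?_)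
    ((card_union_le _ _).trans_lt hN)
  rcases he with he | ⟨he, hve⟩
  · exact mem_union_left _ he
  · exact mem_union_right _ (mem_conflictCover hvt he hve hsee)

lemma HasStrongColoring.of_delV_of_neighborFinset_eq {N : ℕ} [NeZero N] {v a b c : V}
    (h : HasStrongColoring (DelV G v) N) (hv : G.neighborFinset v = {a, b, c})
    (hc : #(conflictCover G v c) < N) (hb : #(conflictCover G v b) + 1 < N)
    (ha : #(conflictCover G v a) + 2 < N) : HasStrongColoring G N := by
  have hadj : ∀ u ∈ ({a, b, c} : Finset V), G.Adj v u := fun u hu =>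
    (mem_neighborFinset _ _ _).1 (hv ▸ hu)
  obtain ⟨f₀, hf₀⟩ := h.exists_isStrongColoringOn_delV
  have hf₀' : IsStrongColoringOn G (↑(∅ : Finset (Sym2 V)) ∪ {e | e ∈ G.edgeSet ∧ v ∉ e}) f₀ := by
    simpa using hf₀
  obtain ⟨f₁, hf₁⟩ := hf₀'.exists_insert_edge (hadj c (by simp)) (by rw [card_empty]; omega)
  obtain ⟨f₂, hf₂⟩ := hf₁.exists_insert_edge (hadj b (by simp))
    (by rw [insert_empty, card_singleton]; omega)
  obtain ⟨f₃, hf₃⟩ := hf₂.exists_insert_edge (hadj a (by simp))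
    (by simp only [insert_empty]; have := card_le_two (a := s(v, b)) (b := s(v, c)); omega)
  refine hf₃.hasStrongColoring fun e he => ?_
  by_cases hve : v ∈ e
  · obtain ⟨u, rfl⟩ := Sym2.mem_iff_exists.1 hve
    have hu : u ∈ G.neighborFinset v := (mem_neighborFinset _ _ _).2 he
    rw [hv] at hu
    simp only [mem_insert, mem_singleton] at hu
    rcases hu with rfl | rfl | rfl <;> simp
  · exact Or.inr ⟨he, hve⟩

end ConflictCover

section DegreeCounting

variable {G : SimpleGraph V} [Fintype V] [DecidableRel G.Adj]

lemma exists_neighborFinset_eq_of_degree_eq_three_s16 [DecidableEq V] {v a b : V}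
    (hd : G.degree v = 3) (ha : G.Adj v a) (hb : G.Adj v b) (hab : a ≠ b) :
    ∃ c, c ≠ a ∧ c ≠ b ∧ G.neighborFinset v = {a, b, c} := by
  have ha' : a ∈ G.neighborFinset v := (mem_neighborFinset _ _ _).2 ha
  have hb' : b ∈ (G.neighborFinset v).erase a :=
    mem_erase.2 ⟨hab.symm, (mem_neighborFinset _ _ _).2 hb⟩
  obtain ⟨c, hc⟩ := card_eq_one.1 (by
    rw [card_erase_of_mem hb', card_erase_of_mem ha', card_neighborFinset_eq_degree, hd] :
      #(((G.neighborFinset v).erase a).erase b) = 1)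
  have hcmem : c ∈ ((G.neighborFinset v).erase a).erase b := hc ▸ mem_singleton_self c
  refine ⟨c, (mem_erase.1 (mem_erase.1 hcmem).2).1, (mem_erase.1 hcmem).1, ?_⟩
  rw [← insert_erase ha', ← insert_erase hb', hc]

lemma Is4C.sum_degree_neighborFinset_le (hθ : ∀ u w, G.Adj u w → G.degree u + G.degree w ≤ 8)
    {x : V} (hx : Is4C G x) : ∑ u ∈ G.neighborFinset x, G.degree u ≤ 14 := by
  obtain ⟨hdx, hthree⟩ := hx
  have hcard3 : #{u ∈ G.neighborFinset x | G.degree u = 3} = 2 := by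
    rw [← hthree, ← Set.ncard_coe_finset]
    congr 1
    ext u
    simp
  have hcard_not3 : #{u ∈ G.neighborFinset x | ¬G.degree u = 3} = 2 := by
    have := card_filter_add_card_filter_not (s := G.neighborFinset x) (fun u => G.degree u = 3)
    rw [card_neighborFinset_eq_degree] at this
    omega
  have hsum3 : ∑ u ∈ G.neighborFinset x with G.degree u = 3, G.degree u = 2 * 3 := by
    rw [sum_congr rfl fun u hu => (mem_filter.1 hu).2, sum_const, hcard3, smul_eq_mul]
  have hsum_not3 : ∑ u ∈ G.neighborFinset x with ¬G.degree u = 3, G.degree u ≤ 2 * 4 := by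
    rw [← hcard_not3, ← smul_eq_mul]
    refine sum_le_card_nsmul _ _ _ fun u hu => ?_
    have := hθ x u ((mem_neighborFinset _ _ _).1 (mem_filter.1 hu).1)
    omega
  rw [← sum_filter_add_sum_filter_not _ (fun u => G.degree u = 3)]
  omega

variable [DecidableEq V]

lemma card_neighborFinset_sdiff_lt {u a : V} {A : Finset V} (hua : G.Adj u a) (ha : a ∈ A) :
    #(G.neighborFinset u \ A) < G.degree u := by
  rw [← card_neighborFinset_eq_degree]
  exact card_lt_card ⟨sdiff_subset, fun h =>
    (mem_sdiff.1 (h ((mem_neighborFinset _ _ _).2 hua))).2 ha⟩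

lemma sum_card_neighborFinset_sdiff_le {k : ℕ}
    (hθ : ∀ u w, G.Adj u w → G.degree u + G.degree w ≤ k) {v t : V} (hvt : G.Adj v t) :
    ∑ u ∈ (G.neighborFinset t).erase v, #(G.neighborFinset u \ G.neighborFinset v) ≤
      (G.degree t - 1) * (k - G.degree t - 1) := by
  have hcard : #((G.neighborFinset t).erase v) = G.degree t - 1 := by
    rw [card_erase_of_mem ((mem_neighborFinset _ _ _).2 hvt.symm), card_neighborFinset_eq_degree]
  rw [← hcard, ← smul_eq_mul]
  refine sum_le_card_nsmul _ _ _ fun u hu => ?_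
  have htu : G.Adj t u := (mem_neighborFinset _ _ _).1 (mem_of_mem_erase hu)
  have := card_neighborFinset_sdiff_lt htu.symm ((mem_neighborFinset _ _ _).2 hvt)
  have := hθ t u htu
  omega

/-- The saving comes from `s`, which has the two neighbors `t` and `y` inside `N(v)`. -/
lemma Is4C.sum_card_neighborFinset_sdiff_add_degree_le
    (hθ : ∀ u w, G.Adj u w → G.degree u + G.degree w ≤ 8) {v t s y : V} (ht : Is4C G t)
    (hvt : G.Adj v t) (hts : G.Adj t s) (hsv : s ≠ v) (hsy : G.Adj s y) (hvy : G.Adj v y)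
    (hyt : y ≠ t) :
    ∑ u ∈ (G.neighborFinset t).erase v, #(G.neighborFinset u \ G.neighborFinset v) +
      G.degree v ≤ 10 := by
  set A := G.neighborFinset v
  set E := (G.neighborFinset t).erase v
  have hvN : v ∈ G.neighborFinset t := (mem_neighborFinset _ _ _).2 hvt.symm
  have htA : t ∈ A := (mem_neighborFinset _ _ _).2 hvt
  have hsplit : ∑ u ∈ E, #(G.neighborFinset u \ A) + ∑ u ∈ E, #(G.neighborFinset u ∩ A) =
      ∑ u ∈ E, G.degree u := by
    rw [← sum_add_distrib]
    exact sum_congr rfl fun u _ => card_sdiff_add_card_inter _ _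
  have hdeg : ∑ u ∈ E, G.degree u + G.degree v = ∑ u ∈ G.neighborFinset t, G.degree u :=
    sum_erase_add _ _ hvN
  have hE : #E = 3 := by
    rw [card_erase_of_mem hvN, card_neighborFinset_eq_degree, ht.1]
  have hinter : #E < ∑ u ∈ E, #(G.neighborFinset u ∩ A) := by
    rw [card_eq_sum_ones]
    refine sum_lt_sum (fun u hu => card_pos.2 ⟨t, mem_inter.2
      ⟨(mem_neighborFinset _ _ _).2 ((mem_neighborFinset _ _ _).1 (mem_of_mem_erase hu)).symm,
        htA⟩⟩) ⟨s, mem_erase.2 ⟨hsv, (mem_neighborFinset _ _ _).2 hts⟩, one_lt_card.2 ?_⟩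
    exact ⟨t, mem_inter.2 ⟨(mem_neighborFinset _ _ _).2 hts.symm, htA⟩,
      y, mem_inter.2 ⟨(mem_neighborFinset _ _ _).2 hsy, (mem_neighborFinset _ _ _).2 hvy⟩,
      hyt.symm⟩
  have := ht.sum_degree_neighborFinset_le hθ
  omega

end DegreeCounting

/-- θ ≤ 8, χ'ₛ > 20: no 4-cycle x₁x₂x₃x₄ with x₁ a 3-vertex and x₂,x₃,x₄
4(C)-vertices. -/
theorem stmt16 [Fintype V] (H : SimpleGraph V) [DecidableRel H.Adj]
    (hore : ∀ u w, H.Adj u w → H.degree u + H.degree w ≤ 8)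
    (hnc : ¬ HasStrongColoring H 20)
    (hmin : ∀ v, HasStrongColoring (DelV H v) 20) :
    ¬ ∃ x₁ x₂ x₃ x₄ : V, H.Adj x₁ x₂ ∧ H.Adj x₂ x₃ ∧ H.Adj x₃ x₄ ∧ H.Adj x₄ x₁ ∧
      x₁ ≠ x₃ ∧ x₂ ≠ x₄ ∧ H.degree x₁ = 3 ∧ Is4C H x₂ ∧ Is4C H x₃ ∧ Is4C H x₄ := by
  rintro ⟨x₁, x₂, x₃, x₄, h12, h23, h34, h41, h13, h24, hd1, h2, -, h4⟩
  classical
  obtain ⟨w, hw2, hw4, hN₁⟩ := exists_neighborFinset_eq_of_degree_eq_three_s16 hd1 h12 h41.symm h24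
  have hw : H.Adj x₁ w := (mem_neighborFinset _ _ _).1 (by simp [hN₁])
  have hdw : H.degree w ≤ 5 := by have := hore x₁ w hw; omega
  have hsum₁ : ∑ u ∈ H.neighborFinset x₁, (H.degree u - 1) = 6 + (H.degree w - 1) := by
    rw [hN₁, sum_insert (by simp [h24, hw2.symm]), sum_pair hw4.symm, h2.1, h4.1]
    omega
  have hcw : #(conflictCover H x₁ w) ≤ 18 := by
    have hcover := card_conflictCover_le (G := H) x₁ w
    have hfar := sum_card_neighborFinset_sdiff_le hore hw
    generalize H.degree w = d at *
    interval_cases d <;> omega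
  have hc2 : #(conflictCover H x₁ x₂) ≤ 17 := by
    have hcover := card_conflictCover_le (G := H) x₁ x₂
    have hfar := h2.sum_card_neighborFinset_sdiff_add_degree_le hore h12 h23 h13.symm h34 h41.symm
      h24.symm
    omega
  have hc4 : #(conflictCover H x₁ x₄) ≤ 17 := by
    have hcover := card_conflictCover_le (G := H) x₁ x₄
    have hfar := h4.sum_card_neighborFinset_sdiff_add_degree_le hore h41.symm h34.symm h13.symm
      h23.symm h12 h24
    omega
  exact hnc ((hmin x₁).of_delV_of_neighborFinset_eq hN₁ (by omega) (by omega) (by omega))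
end
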